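/- arXiv:2003.05219 — 2 statements merged into one kernel-verified Lean document; each statement's English description precedes it below -/
import Mathlib

section
/- Suppose Φ : ℂⁿ → HS(H) is Borel with ‖Φ(u)‖_{HS} ≤ C μ_G-a.e., and Δ ⊆ ℂⁿ is a bounded Borel set. Then ∫_Δ exp(|z|²) (∫_{ℂⁿ} ‖Ξ_Φ(z,w)‖²_{HS} dμ_G(w)) dμ_G(z) < ∞; consequently the kernel Θ(z,w)* g = χ_Δ(z) k_z(w) Ξ_Φ(z, w−z)g is a Hilbert–Schmidt kernel with respect to μ_G ⊗ μ_G. -/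
/-!
Cauchy–Schwarz against the weight `|k_w|` gives `‖Ξ_Φ(z,w)‖²_HS ≤ C² (∫ |k_w| dμ_G)²`, and
`|k_w(u)| ≤ exp(|w|²/3 + 3|u|²/4)` bounds this by a multiple of `exp(2|w|²/3)`, which is
`μ_G`-integrable; so the inner integral is bounded uniformly in `z`, and `exp(|z|²)` is bounded on
the bounded set `Δ`. For `Θ`, `‖Θ(z,w)‖_HS = χ_Δ(z) |k_z(w)| ‖Ξ_Φ(z,w-z)‖_HS`, and translating
`w ↦ w + z` turns `|k_z(w)|² dμ_G(w)` into `exp(|z|²) dμ_G(w)`, so the double integral of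
`‖Θ‖²_HS` is exactly the first integral.
-/

open MeasureTheory Complex ENNReal Filter

noncomputable section

/-- `ℂⁿ` with the standard Hermitian structure. -/
abbrev Cn (n : ℕ) := EuclideanSpace ℂ (Fin n)

instance (n : ℕ) : MeasurableSpace (Cn n) := borel _
instance (n : ℕ) : BorelSpace (Cn n) := ⟨rfl⟩

/-- The Gaussian measure `dμ_G(z) = π^{-n} exp(-|z|²) dV(z)` on `ℂⁿ`. -/
def gaussian (n : ℕ) : Measure (Cn n) :=
  volume.withDensity fun z =>
    ENNReal.ofReal ((Real.pi ^ n)⁻¹ * Real.exp (-‖z‖ ^ 2))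

/-- The reproducing kernel function `k_λ(z) = exp(⟨z,λ⟩)`, where `⟨z,λ⟩ = Σ z_i conj(λ_i)`
(which in Mathlib's convention is `⟪λ, z⟫`). -/
def kern {n : ℕ} (lam z : Cn n) : ℂ := Complex.exp ((inner ℂ lam z : ℂ))

variable {H : Type} [NormedAddCommGroup H] [InnerProductSpace ℂ H] [CompleteSpace H]

/-- The squared Hilbert–Schmidt norm of an operator, computed in a Hilbert basis
(with value `∞` when the operator is not Hilbert–Schmidt). -/
def hsNormSq {ι : Type} (b : HilbertBasis ι ℂ H) (A : H →L[ℂ] H) : ℝ≥0∞ :=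
  ∑' i, (‖A (b i)‖₊ : ℝ≥0∞) ^ 2

lemma ENNReal.sq_lintegral_mul_le {α : Type*} [MeasurableSpace α] {μ : Measure α}
    {g f : α → ℝ≥0∞} (hg : AEMeasurable g μ) (hf : AEMeasurable f μ) :
    (∫⁻ a, g a * f a ∂μ) ^ 2 ≤ (∫⁻ a, g a ∂μ) * ∫⁻ a, g a * f a ^ 2 ∂μ := by
  have hsqrt : ∀ x : ℝ≥0∞, x ^ (1 / 2 : ℝ) * x ^ (1 / 2 : ℝ) = x := fun x => by
    rw [← ENNReal.rpow_add_of_nonneg _ _ (by norm_num) (by norm_num)]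
    norm_num
  have hsq : ∀ x : ℝ≥0∞, (x ^ (1 / 2 : ℝ)) ^ 2 = x := fun x => by rw [sq, hsqrt]
  have hholder : ∫⁻ a, g a ^ (1 / 2 : ℝ) * (g a * f a ^ 2) ^ (1 / 2 : ℝ) ∂μ ≤
      (∫⁻ a, g a ∂μ) ^ (1 / 2 : ℝ) * (∫⁻ a, g a * f a ^ 2 ∂μ) ^ (1 / 2 : ℝ) :=
    ENNReal.lintegral_mul_norm_pow_le hg (hg.mul (hf.pow_const 2)) (by norm_num) (by norm_num)
      (by norm_num)
  have hintegrand : ∀ a, g a ^ (1 / 2 : ℝ) * (g a * f a ^ 2) ^ (1 / 2 : ℝ) = g a * f a := by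
    intro a
    rw [ENNReal.mul_rpow_of_nonneg _ _ (by norm_num), ← mul_assoc, hsqrt,
      ← ENNReal.rpow_natCast, ← ENNReal.rpow_mul]
    norm_num
  simp only [hintegrand] at hholder
  calc (∫⁻ a, g a * f a ∂μ) ^ 2
      ≤ ((∫⁻ a, g a ∂μ) ^ (1 / 2 : ℝ) * (∫⁻ a, g a * f a ^ 2 ∂μ) ^ (1 / 2 : ℝ)) ^ 2 :=
        pow_le_pow_left' hholder 2
    _ = (∫⁻ a, g a ∂μ) * ∫⁻ a, g a * f a ^ 2 ∂μ := by rw [mul_pow, hsq, hsq]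

lemma ENNReal.tsum_lintegral_le_lintegral_tsum {α ι : Type*} [MeasurableSpace α]
    {μ : Measure α} {f : ι → α → ℝ≥0∞} (hf : ∀ i, AEMeasurable (f i) μ) :
    ∑' i, ∫⁻ a, f i a ∂μ ≤ ∫⁻ a, ∑' i, f i a ∂μ := by
  rw [ENNReal.tsum_eq_iSup_sum]
  refine iSup_le fun s => ?_
  rw [← lintegral_finsetSum' s fun i _ => hf i]
  exact lintegral_mono fun a => ENNReal.sum_le_tsum s

lemma HilbertBasis.enorm_sq_eq_tsum {𝕜 E ι : Type*} [RCLike 𝕜] [NormedAddCommGroup E]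
    [InnerProductSpace 𝕜 E] (b : HilbertBasis ι 𝕜 E) (x : E) :
    ‖x‖ₑ ^ 2 = ∑' i, ‖(inner 𝕜 (b i) x : 𝕜)‖ₑ ^ 2 := by
  have h := lp.hasSum_norm (p := 2) (by norm_num) (b.repr x)
  simp only [LinearIsometryEquiv.norm_map, HilbertBasis.repr_apply_apply, ENNReal.toReal_ofNat,
    Real.rpow_ofNat] at h
  simp_rw [← ofReal_norm, ← ENNReal.ofReal_pow (norm_nonneg _)]
  rw [← ENNReal.ofReal_tsum_of_nonneg (fun i => by positivity) h.summable, h.tsum_eq]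

section HilbertSchmidt

variable {E ι : Type} [NormedAddCommGroup E] [InnerProductSpace ℂ E] (b : HilbertBasis ι ℂ E)

lemma hsNormSq_eq_tsum_enorm (A : E →L[ℂ] E) : hsNormSq b A = ∑' i, ‖A (b i)‖ₑ ^ 2 := by
  simp only [hsNormSq, enorm_eq_nnnorm]

lemma hsNormSq_eq_tsum_tsum (A : E →L[ℂ] E) :
    hsNormSq b A = ∑' i, ∑' j, ‖(inner ℂ (b j) (A (b i)) : ℂ)‖ₑ ^ 2 :=
  (hsNormSq_eq_tsum_enorm b A).trans (tsum_congr fun i => b.enorm_sq_eq_tsum (A (b i)))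

lemma hsNormSq_adjoint [CompleteSpace E] (A : E →L[ℂ] E) :
    hsNormSq b (ContinuousLinearMap.adjoint A) = hsNormSq b A := by
  have hswap : ∀ i j, ‖(inner ℂ (A (b j)) (b i) : ℂ)‖ₑ = ‖(inner ℂ (b i) (A (b j)) : ℂ)‖ₑ :=
    fun i j => by rw [← inner_conj_symm, RCLike.enorm_conj]
  simp_rw [hsNormSq_eq_tsum_tsum, ContinuousLinearMap.adjoint_inner_right, hswap]
  exact ENNReal.tsum_comm

lemma hsNormSq_smul (c : ℂ) (A : E →L[ℂ] E) :
    hsNormSq b (c • A) = ‖c‖ₑ ^ 2 * hsNormSq b A := by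
  simp only [hsNormSq_eq_tsum_enorm, ← ENNReal.tsum_mul_left, FunLike.coe_smul,
    Pi.smul_apply, enorm_smul, mul_pow]

lemma hsNormSq_eq_of_adjoint_apply [CompleteSpace E] {T B : E →L[ℂ] E} {c : ℂ}
    (h : ∀ g, ContinuousLinearMap.adjoint T g = c • B g) :
    hsNormSq b T = ‖c‖ₑ ^ 2 * hsNormSq b B := by
  rw [← hsNormSq_adjoint, show ContinuousLinearMap.adjoint T = c • B from
    ContinuousLinearMap.ext h, hsNormSq_smul]

lemma hsNormSq_le_of_eq_integral {α : Type*} [MeasurableSpace α] {μ : Measure α}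
    {F : α → E →L[ℂ] E} {k : α → ℂ} {A : E →L[ℂ] E} {C : ℝ≥0∞}
    (hk : AEMeasurable (fun u => ‖k u‖ₑ) μ) (hF : ∀ g, AEStronglyMeasurable (fun u => F u g) μ)
    (hC : ∀ᵐ u ∂μ, hsNormSq b (F u) ≤ C) (hA : ∀ g, A g = ∫ u, k u • F u g ∂μ) :
    hsNormSq b A ≤ C * (∫⁻ u, ‖k u‖ₑ ∂μ) ^ 2 := by
  have hcoord : ∀ i, ‖A (b i)‖ₑ ^ 2 ≤
      (∫⁻ u, ‖k u‖ₑ ∂μ) * ∫⁻ u, ‖k u‖ₑ * ‖F u (b i)‖ₑ ^ 2 ∂μ := by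
    intro i
    refine (pow_le_pow_left' ?_ 2).trans (ENNReal.sq_lintegral_mul_le hk (hF (b i)).enorm)
    rw [hA]
    simpa only [enorm_smul] using enorm_integral_le_lintegral_enorm (fun u => k u • F u (b i))
  calc hsNormSq b A
      ≤ ∑' i, (∫⁻ u, ‖k u‖ₑ ∂μ) * ∫⁻ u, ‖k u‖ₑ * ‖F u (b i)‖ₑ ^ 2 ∂μ :=
        ENNReal.tsum_le_tsum hcoord
    _ ≤ (∫⁻ u, ‖k u‖ₑ ∂μ) * ∫⁻ u, ‖k u‖ₑ * hsNormSq b (F u) ∂μ := by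
        rw [ENNReal.tsum_mul_left]
        gcongr
        refine (ENNReal.tsum_lintegral_le_lintegral_tsum fun i =>
          hk.mul ((hF (b i)).enorm.pow_const 2)).trans_eq (lintegral_congr fun u => ?_)
        simp only [Pi.mul_apply, ENNReal.tsum_mul_left, hsNormSq_eq_tsum_enorm]
    _ ≤ (∫⁻ u, ‖k u‖ₑ ∂μ) * ∫⁻ u, ‖k u‖ₑ * C ∂μ := by
        refine mul_le_mul_of_nonneg_left (lintegral_mono_ae ?_) zero_le
        exact hC.mono fun u hu => mul_le_mul_of_nonneg_left hu zero_le
    _ = C * (∫⁻ u, ‖k u‖ₑ ∂μ) ^ 2 := by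
        rw [lintegral_mul_const'' _ hk]
        ring

end HilbertSchmidt

namespace Cn

variable {n : ℕ}

lemma measurable_gaussian_density :
    Measurable fun z : Cn n => ENNReal.ofReal ((Real.pi ^ n)⁻¹ * Real.exp (-‖z‖ ^ 2)) := by
  fun_prop

lemma lintegral_gaussian (f : Cn n → ℝ≥0∞) :
    ∫⁻ z, f z ∂gaussian n =
      ∫⁻ z, ENNReal.ofReal ((Real.pi ^ n)⁻¹ * Real.exp (-‖z‖ ^ 2)) * f z := by
  rw [gaussian, lintegral_withDensity_eq_lintegral_mul_non_measurable _
    measurable_gaussian_density (.of_forall fun _ => ofReal_lt_top)]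
  rfl

lemma volume_absolutelyContinuous_gaussian : (volume : Measure (Cn n)) ≪ gaussian n :=
  withDensity_absolutelyContinuous' measurable_gaussian_density.aemeasurable
    (.of_forall fun _ => (ENNReal.ofReal_pos.mpr (by positivity)).ne')

lemma ae_gaussian_add_left {p : Cn n → Prop} (h : ∀ᵐ u ∂gaussian n, p u) (z : Cn n) :
    ∀ᵐ u ∂gaussian n, p (z + u) :=
  withDensity_absolutelyContinuous _ _ |>.ae_le <|
    (measurePreserving_add_left volume z).quasiMeasurePreserving.ae
      (volume_absolutelyContinuous_gaussian.ae_le h)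

lemma integrable_exp_neg_mul_sq_norm {a : ℝ} (ha : 0 < a) :
    Integrable (fun z : Cn n => Real.exp (-a * ‖z‖ ^ 2)) := by
  have h := GaussianFourier.integrable_cexp_neg_mul_sq_norm_add (V := Cn n) (b := (a : ℂ))
    (by simpa using ha) 0 0
  simp only [zero_mul, add_zero, inner_zero_left] at h
  refine h.norm.congr (.of_forall fun z => ?_)
  dsimp only
  rw [Complex.norm_exp]
  norm_cast

lemma lintegral_exp_mul_sq_norm_lt_top {c : ℝ} (hc : c < 1) :
    ∫⁻ z, ENNReal.ofReal (Real.exp (c * ‖z‖ ^ 2)) ∂gaussian n < ∞ := by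
  have hprod : ∀ z : Cn n, ENNReal.ofReal ((Real.pi ^ n)⁻¹ * Real.exp (-‖z‖ ^ 2)) *
      ENNReal.ofReal (Real.exp (c * ‖z‖ ^ 2)) =
      ENNReal.ofReal ((Real.pi ^ n)⁻¹) * ENNReal.ofReal (Real.exp (-(1 - c) * ‖z‖ ^ 2)) := by
    intro z
    rw [← ENNReal.ofReal_mul (by positivity), ← ENNReal.ofReal_mul (by positivity), mul_assoc,
      ← Real.exp_add]
    ring_nf
  rw [lintegral_gaussian, lintegral_congr hprod, lintegral_const_mul' _ _ ofReal_ne_top]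
  exact mul_lt_top ofReal_lt_top
    (integrable_exp_neg_mul_sq_norm (by linarith)).lintegral_lt_top

instance : IsFiniteMeasure (gaussian n) :=
  ⟨by simpa using lintegral_exp_mul_sq_norm_lt_top (n := n) zero_lt_one⟩

lemma enorm_kern (w u : Cn n) : ‖kern w u‖ₑ = ENNReal.ofReal (Real.exp (inner ℂ w u).re) := by
  rw [← ofReal_norm, kern, Complex.norm_exp]

lemma gaussian_density_mul_enorm_kern_sq (z w : Cn n) :
    ENNReal.ofReal ((Real.pi ^ n)⁻¹ * Real.exp (-‖w‖ ^ 2)) * ‖kern z w‖ₑ ^ 2 =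
      ENNReal.ofReal (Real.exp (‖z‖ ^ 2)) *
        ENNReal.ofReal ((Real.pi ^ n)⁻¹ * Real.exp (-‖w - z‖ ^ 2)) := by
  have hsub : ‖w - z‖ ^ 2 = ‖w‖ ^ 2 - 2 * (inner ℂ z w).re + ‖z‖ ^ 2 := by
    rw [@norm_sub_sq ℂ, ← inner_conj_symm, RCLike.conj_re]
    rfl
  rw [enorm_kern, ← ENNReal.ofReal_pow (by positivity), ← Real.exp_nat_mul,
    ← ENNReal.ofReal_mul (by positivity), ← ENNReal.ofReal_mul (by positivity), hsub,
    mul_assoc, mul_left_comm (Real.exp _), ← Real.exp_add, ← Real.exp_add]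
  push_cast
  ring_nf

lemma lintegral_enorm_kern_sq_mul_comp_sub (z : Cn n) (f : Cn n → ℝ≥0∞) :
    ∫⁻ w, ‖kern z w‖ₑ ^ 2 * f (w - z) ∂gaussian n =
      ENNReal.ofReal (Real.exp (‖z‖ ^ 2)) * ∫⁻ w, f w ∂gaussian n := by
  simp_rw [lintegral_gaussian, ← mul_assoc, gaussian_density_mul_enorm_kern_sq, mul_assoc]
  rw [lintegral_const_mul' _ _ ofReal_ne_top, lintegral_sub_right_eq_self
    (fun w => ENNReal.ofReal ((Real.pi ^ n)⁻¹ * Real.exp (-‖w‖ ^ 2)) * f w) z]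

-- `3/4 < 1` and `2 · 1/3 < 1` keep both resulting Gaussian integrals finite.
lemma lintegral_enorm_kern_le (w : Cn n) :
    ∫⁻ u, ‖kern w u‖ₑ ∂gaussian n ≤ ENNReal.ofReal (Real.exp (‖w‖ ^ 2 / 3)) *
      ∫⁻ u, ENNReal.ofReal (Real.exp (3 / 4 * ‖u‖ ^ 2)) ∂gaussian n := by
  rw [← lintegral_const_mul' _ _ ofReal_ne_top]
  refine lintegral_mono fun u => ?_
  rw [enorm_kern, ← ENNReal.ofReal_mul (by positivity), ← Real.exp_add]
  refine ENNReal.ofReal_le_ofReal (Real.exp_le_exp.mpr ?_)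
  have hcs : (inner ℂ w u).re ≤ ‖w‖ * ‖u‖ := (re_le_norm _).trans (norm_inner_le_norm w u)
  nlinarith [sq_nonneg (2 * ‖w‖ - 3 * ‖u‖)]

lemma lintegral_sq_lintegral_enorm_kern_lt_top :
    ∫⁻ w, (∫⁻ u, ‖kern w u‖ₑ ∂gaussian n) ^ 2 ∂gaussian n < ∞ := by
  set E := ∫⁻ u, ENNReal.ofReal (Real.exp (3 / 4 * ‖u‖ ^ 2)) ∂gaussian n
  have hbound : ∀ w : Cn n, (∫⁻ u, ‖kern w u‖ₑ ∂gaussian n) ^ 2 ≤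
      ENNReal.ofReal (Real.exp (2 / 3 * ‖w‖ ^ 2)) * E ^ 2 := by
    intro w
    refine (pow_le_pow_left' (lintegral_enorm_kern_le w) 2).trans_eq ?_
    rw [mul_pow, ← ENNReal.ofReal_pow (by positivity), ← Real.exp_nat_mul]
    congr 3
    push_cast
    ring
  refine (lintegral_mono hbound).trans_lt ?_
  rw [lintegral_mul_const' _ _ (pow_ne_top (lintegral_exp_mul_sq_norm_lt_top (by norm_num)).ne)]
  exact mul_lt_top (lintegral_exp_mul_sq_norm_lt_top (by norm_num))
    (pow_lt_top (lintegral_exp_mul_sq_norm_lt_top (by norm_num)))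

lemma setLIntegral_exp_sq_norm_lt_top {Δ : Set (Cn n)} (hΔ : Bornology.IsBounded Δ) :
    ∫⁻ z in Δ, ENNReal.ofReal (Real.exp (‖z‖ ^ 2)) ∂gaussian n < ∞ := by
  obtain ⟨R, hR⟩ := hΔ.exists_norm_le
  refine setLIntegral_lt_top_of_le_nnreal (measure_ne_top _ _)
    ⟨(Real.exp (R ^ 2)).toNNReal, fun z hz => ?_⟩
  rw [ENNReal.ofNNReal_toNNReal]
  gcongr
  exact hR z hz

end Cn

/-- for `Φ` essentially bounded in Hilbert–Schmidt norm and `Δ ⊆ ℂⁿ` a bounded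
Borel set, `∫_Δ exp(|z|²) (∫ ‖Ξ_Φ(z,w)‖²_{HS} dμ_G(w)) dμ_G(z) < ∞`, and hence the kernel
`Θ(z,w)* g = χ_Δ(z)·k_z(w)·Ξ_Φ(z,w−z)g` is a Hilbert–Schmidt kernel. -/
theorem truncated_kernel_hilbertSchmidt {n : ℕ} {ι : Type} (b : HilbertBasis ι ℂ H)
    (Φ : Cn n → H →L[ℂ] H) (C : ℝ)
    (hC : ∀ᵐ u ∂(gaussian n), hsNormSq b (Φ u) ≤ ENNReal.ofReal (C ^ 2))
    (Δ : Set (Cn n)) (hΔb : Bornology.IsBounded Δ) (hΔm : MeasurableSet Δ)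
    (Xi : Cn n → Cn n → H →L[ℂ] H)
    (hInt : ∀ (z w : Cn n) (g : H),
      Integrable (fun u => (starRingEnd ℂ) (kern w u) • Φ (z + u) g) (gaussian n))
    (hXi : ∀ (z w : Cn n) (g : H),
      Xi z w g = ∫ u, (starRingEnd ℂ) (kern w u) • Φ (z + u) g ∂(gaussian n))
    (Θ : Cn n → Cn n → H →L[ℂ] H)
    (hΘ : ∀ (z w : Cn n) (g : H),
      ContinuousLinearMap.adjoint (Θ z w) g =
        Δ.indicator (fun _ => (1 : ℂ)) z • (kern z w • Xi z (w - z) g)) :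
    (∫⁻ z in Δ, ENNReal.ofReal (Real.exp (‖z‖ ^ 2)) *
        ∫⁻ w, hsNormSq b (Xi z w) ∂(gaussian n) ∂(gaussian n)) < ∞ ∧
    ∫⁻ z, ∫⁻ w, hsNormSq b (Θ z w) ∂(gaussian n) ∂(gaussian n) < ∞ := by
  have hΦ_meas : ∀ z g, AEStronglyMeasurable (fun u => Φ (z + u) g) (gaussian n) := fun z g => by
    simpa [kern] using (hInt z 0 g).aestronglyMeasurable
  have hXi_int : ∀ z, ∫⁻ w, hsNormSq b (Xi z w) ∂gaussian n ≤ ENNReal.ofReal (C ^ 2) *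
      ∫⁻ w, (∫⁻ u, ‖kern w u‖ₑ ∂gaussian n) ^ 2 ∂gaussian n := fun z => by
    refine (lintegral_mono fun w => ?_).trans_eq (lintegral_const_mul' _ _ ofReal_ne_top)
    simpa only [RCLike.enorm_conj] using hsNormSq_le_of_eq_integral b (by unfold kern; fun_prop)
      (hΦ_meas z) (Cn.ae_gaussian_add_left hC z) (hXi z w)
  have hΘ_int : ∀ z, ∫⁻ w, hsNormSq b (Θ z w) ∂gaussian n =
      Δ.indicator (fun z => ENNReal.ofReal (Real.exp (‖z‖ ^ 2)) *
        ∫⁻ w, hsNormSq b (Xi z w) ∂gaussian n) z := fun z => by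
    have hΘ_eq : ∀ w, hsNormSq b (Θ z w) =
        ‖Δ.indicator (fun _ => (1 : ℂ)) z * kern z w‖ₑ ^ 2 * hsNormSq b (Xi z (w - z)) :=
      fun w => hsNormSq_eq_of_adjoint_apply b fun g => (hΘ z w g).trans (smul_smul _ _ _)
    by_cases hz : z ∈ Δ
    · simpa [hΘ_eq, hz] using Cn.lintegral_enorm_kern_sq_mul_comp_sub z fun w => hsNormSq b (Xi z w)
    · simp [hΘ_eq, hz]
  have hfirst : (∫⁻ z in Δ, ENNReal.ofReal (Real.exp (‖z‖ ^ 2)) *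
      ∫⁻ w, hsNormSq b (Xi z w) ∂gaussian n ∂gaussian n) < ∞ := by
    refine (setLIntegral_mono' hΔm fun z _ =>
      mul_le_mul_of_nonneg_left (hXi_int z) zero_le).trans_lt ?_
    rw [lintegral_mul_const' _ _ (mul_lt_top ofReal_lt_top
      Cn.lintegral_sq_lintegral_enorm_kern_lt_top).ne]
    exact mul_lt_top (Cn.setLIntegral_exp_sq_norm_lt_top hΔb)
      (mul_lt_top ofReal_lt_top Cn.lintegral_sq_lintegral_enorm_kern_lt_top)
  refine ⟨hfirst, ?_⟩
  rwa [lintegral_congr hΘ_int, lintegral_indicator hΔm]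
end
end

section
/- Let C > 0 and let G : ℂⁿ × ℂⁿ → [0,∞) be Borel with G(z,w) ≤ C exp(|w|²/4) for all z,w. Then for every w ∈ ℂⁿ and every r ≥ 0, ∫_{ℂⁿ} χ_{{|z|≥r}}(z) |k_z(w)| G(z, w−z) exp(|z|²/2) dμ_G(z) ≤ C·2ⁿ(2π)ⁿ π^{-n} exp(|w|²/2). (First Schur-test estimate.) -/
open MeasureTheory Complex ENNReal Filter

noncomputable section

/-! After the pointwise bound on `G`, the integrand against `dμ_G` is at most
`C π^{-n} exp(-|z|² + Re⟨w,z⟩ + |z-w|²/4 + |z|²/2)`, and completing the square turns the exponent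
into `|w|²/2 - |z-w|²/4`. The remaining Gaussian integral of `exp(-|z-w|²/4)` over `ℂⁿ = ℝ²ⁿ`
equals `(4π)ⁿ = 2ⁿ(2π)ⁿ`. -/

theorem lintegral_exp_neg_mul_sq_norm {V : Type*} [NormedAddCommGroup V] [InnerProductSpace ℝ V]
    [FiniteDimensional ℝ V] [MeasurableSpace V] [BorelSpace V] {b : ℝ} (hb : 0 < b) :
    ∫⁻ v : V, ENNReal.ofReal (Real.exp (-b * ‖v‖ ^ 2)) =
      ENNReal.ofReal ((Real.pi / b) ^ (Module.finrank ℝ V / 2 : ℝ)) := by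
  have h := GaussianFourier.integral_rexp_neg_mul_sq_norm (V := V) hb
  rw [← h, ofReal_integral_eq_lintegral_ofReal
    (Integrable.of_integral_ne_zero (by rw [h]; positivity))
    (ae_of_all _ fun _ => by positivity)]

theorem lintegral_exp_neg_sq_norm_div_four (n : ℕ) :
    ∫⁻ z : Cn n, ENNReal.ofReal (Real.exp (-‖z‖ ^ 2 / 4)) =
      ENNReal.ofReal ((4 * Real.pi) ^ n) := by
  have hrank : Module.finrank ℝ (Cn n) = 2 * n := by
    rw [finrank_real_of_complex, finrank_euclideanSpace, Fintype.card_fin]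
  simp_rw [neg_div, div_eq_inv_mul _ (4 : ℝ), ← neg_mul]
  rw [lintegral_exp_neg_mul_sq_norm (by norm_num), hrank, div_inv_eq_mul, mul_comm Real.pi,
    show ((2 * n : ℕ) : ℝ) / 2 = n by push_cast; ring, Real.rpow_natCast]

theorem lintegral_gaussian {n : ℕ} (f : Cn n → ℝ≥0∞) :
    ∫⁻ z, f z ∂gaussian n =
      ∫⁻ z, ENNReal.ofReal ((Real.pi ^ n)⁻¹ * Real.exp (-‖z‖ ^ 2)) * f z :=
  lintegral_withDensity_eq_lintegral_mul_non_measurable _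
    (Measurable.ennreal_ofReal (by fun_prop : Continuous _).measurable)
    (ae_of_all _ fun _ => ofReal_lt_top) _

theorem norm_kern {n : ℕ} (z w : Cn n) : ‖kern z w‖ = Real.exp (re (inner ℂ z w)) := by
  rw [kern, Complex.norm_exp]

theorem completeSquare_re_inner {𝕜 E : Type*} [RCLike 𝕜] [NormedAddCommGroup E]
    [InnerProductSpace 𝕜 E] (z w : E) :
    -‖z‖ ^ 2 + RCLike.re (inner 𝕜 z w) + ‖z - w‖ ^ 2 / 4 + ‖z‖ ^ 2 / 2 =
      ‖w‖ ^ 2 / 2 - ‖z - w‖ ^ 2 / 4 := by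
  have h := norm_sub_sq (𝕜 := 𝕜) z w
  linear_combination (1 / 2 : ℝ) * h

theorem gaussian_density_mul_integrand_le {n : ℕ} {C g : ℝ} {z w : Cn n}
    (hg : g ≤ C * Real.exp (‖w - z‖ ^ 2 / 4)) :
    (Real.pi ^ n)⁻¹ * Real.exp (-‖z‖ ^ 2) * (‖kern z w‖ * g * Real.exp (‖z‖ ^ 2 / 2)) ≤
      C * (Real.pi ^ n)⁻¹ * Real.exp (‖w‖ ^ 2 / 2) * Real.exp (-‖z - w‖ ^ 2 / 4) := by
  rw [norm_sub_rev] at hg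
  calc (Real.pi ^ n)⁻¹ * Real.exp (-‖z‖ ^ 2) * (‖kern z w‖ * g * Real.exp (‖z‖ ^ 2 / 2))
      ≤ (Real.pi ^ n)⁻¹ * Real.exp (-‖z‖ ^ 2) *
          (‖kern z w‖ * (C * Real.exp (‖z - w‖ ^ 2 / 4)) * Real.exp (‖z‖ ^ 2 / 2)) := by
        gcongr
    _ = C * (Real.pi ^ n)⁻¹ * Real.exp (-‖z‖ ^ 2 + re (inner ℂ z w) + ‖z - w‖ ^ 2 / 4 +
          ‖z‖ ^ 2 / 2) := by
        rw [norm_kern, Real.exp_add, Real.exp_add, Real.exp_add]; ring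
    _ = C * (Real.pi ^ n)⁻¹ * Real.exp (‖w‖ ^ 2 / 2) * Real.exp (-‖z - w‖ ^ 2 / 4) := by
        have h := completeSquare_re_inner (𝕜 := ℂ) z w
        rw [RCLike.re_to_complex] at h
        rw [h, sub_eq_add_neg, Real.exp_add, neg_div]; ring

theorem schur_test_first_estimate_general {n : ℕ} (C : ℝ)
    (G : Cn n → Cn n → ℝ)
    (hGb : ∀ z w, G z w ≤ C * Real.exp (‖w‖ ^ 2 / 4))
    (w : Cn n) (r : ℝ) :
    ∫⁻ z, {z : Cn n | r ≤ ‖z‖}.indicator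
        (fun z => ENNReal.ofReal (‖kern z w‖ * G z (w - z) * Real.exp (‖z‖ ^ 2 / 2))) z
      ∂(gaussian n) ≤
      ENNReal.ofReal
        (C * 2 ^ n * (2 * Real.pi) ^ n * (Real.pi ^ n)⁻¹ * Real.exp (‖w‖ ^ 2 / 2)) := by
  set K := C * (Real.pi ^ n)⁻¹ * Real.exp (‖w‖ ^ 2 / 2)
  calc _ ≤ ∫⁻ z, ENNReal.ofReal (‖kern z w‖ * G z (w - z) * Real.exp (‖z‖ ^ 2 / 2))
          ∂gaussian n := lintegral_mono (Set.indicator_le_self _ _)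
    _ ≤ ∫⁻ z, ENNReal.ofReal K * ENNReal.ofReal (Real.exp (-‖z - w‖ ^ 2 / 4)) := by
        rw [lintegral_gaussian]
        refine lintegral_mono fun z => ?_
        rw [← ENNReal.ofReal_mul (by positivity), ← ENNReal.ofReal_mul' (by positivity)]
        exact ofReal_le_ofReal (gaussian_density_mul_integrand_le (hGb z (w - z)))
    _ = ENNReal.ofReal (K * (4 * Real.pi) ^ n) := by
        rw [lintegral_const_mul' _ _ ofReal_ne_top,
          lintegral_sub_right_eq_self (fun z => ENNReal.ofReal (Real.exp (-‖z‖ ^ 2 / 4))),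
          lintegral_exp_neg_sq_norm_div_four, ← ENNReal.ofReal_mul' (by positivity)]
    _ = _ := by
        rw [show 4 * Real.pi = 2 * (2 * Real.pi) by ring, mul_pow]; congr 1; ring

/-- first Schur-test estimate: if `0 ≤ G(z,w) ≤ C·exp(|w|²/4)`, then for all
`w` and `r ≥ 0`,
`∫ χ_{|z|≥r} |k_z(w)| G(z,w−z) exp(|z|²/2) dμ_G(z) ≤ C·2ⁿ(2π)ⁿ π^{-n} exp(|w|²/2)`. -/
theorem schur_test_first_estimate {n : ℕ} (C : ℝ) (hC : 0 < C)
    (G : Cn n → Cn n → ℝ)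
    (hGm : Measurable fun p : Cn n × Cn n => G p.1 p.2)
    (hG0 : ∀ z w, 0 ≤ G z w)
    (hGb : ∀ z w, G z w ≤ C * Real.exp (‖w‖ ^ 2 / 4))
    (w : Cn n) (r : ℝ) (hr : 0 ≤ r) :
    ∫⁻ z, {z : Cn n | r ≤ ‖z‖}.indicator
        (fun z => ENNReal.ofReal (‖kern z w‖ * G z (w - z) * Real.exp (‖z‖ ^ 2 / 2))) z
      ∂(gaussian n) ≤
      ENNReal.ofReal
        (C * 2 ^ n * (2 * Real.pi) ^ n * (Real.pi ^ n)⁻¹ * Real.exp (‖w‖ ^ 2 / 2)) :=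
  schur_test_first_estimate_general C G hGb w r
end
end
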